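/- Let A, B be finite-dimensional C*-algebras each equipped with a faithful positive linear functional, regarded as Frobenius algebras in the category of finite-dimensional Hilbert spaces, and suppose both are special (m ∘ m† = id). Then any counital coalgebra *-cohomomorphism f: A → B (i.e., a linear map satisfying m_B† ∘ f = (f ⊗ f) ∘ m_A†, u_B† ∘ f = u_A†, and compatibility with the involutions) is completely positive and preserves the functionals; in particular f is a channel. -/

import Mathlib

open scoped TensorProduct

/-- The "bra" pairing `⟪c ⊗ d, -⟫` on `A ⊗ A` induced by `⟪x, y⟫ = φ(x* y)`. -/
noncomputable def braket {A : Type*} [Ring A] [Algebra ℂ A] [StarRing A]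
    (φ : A →ₗ[ℂ] ℂ) (c d : A) : A ⊗[ℂ] A →ₗ[ℂ] ℂ :=
  TensorProduct.lift <| (LinearMap.mul ℂ ℂ).compl₁₂
    (φ ∘ₗ LinearMap.mulLeft ℂ (star c)) (φ ∘ₗ LinearMap.mulLeft ℂ (star d))

/-- `δ` is the Hermitian adjoint `m†` of multiplication with respect to `⟪x,y⟫ = φ(x* y)`. -/
def IsComulAdjoint {A : Type*} [Ring A] [Algebra ℂ A] [StarRing A]
    (φ : A →ₗ[ℂ] ℂ) (δ : A →ₗ[ℂ] A ⊗[ℂ] A) : Prop :=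
  ∀ a c d : A, braket φ c d (δ a) = φ (star (c * d) * a)

/-- A linear map `f : A → B` between C*-algebras is completely positive: for every `k`,
every positive `k × k` matrix over `A` (i.e. one of the form `N* N`) is sent, entrywise,
to a positive `k × k` matrix over `B`. -/
def IsCompletelyPositive {A B : Type*} [Ring A] [Algebra ℂ A] [StarRing A]
    [Ring B] [Algebra ℂ B] [StarRing B] (f : A →ₗ[ℂ] B) : Prop :=
  ∀ (k : ℕ) (M : Matrix (Fin k) (Fin k) A), (∃ N : Matrix (Fin k) (Fin k) A, M = star N * N) →
    ∃ P : Matrix (Fin k) (Fin k) B, M.map f = star P * P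

/-!
A faithful positive functional `Φ` makes `A` a Hilbert space with `⟪u, v⟫ = Φ (u⋆ v)`. For an
orthonormal basis `b`, Parseval's identity says that the adjoint of multiplication is
`m†(x⋆ y) = ∑ₛ x⋆ bₛ ⊗ bₛ⋆ y`. Speciality of `B` and the cohomomorphism property then give
`f (x⋆ y) = m_B ((f ⊗ f) (m_A† (x⋆ y))) = ∑ₛ f (bₛ⋆ x)⋆ f (bₛ⋆ y)`, so `f` maps `N⋆ N` to a sum
of matrices `Xₛ⋆ Xₛ`. Such a sum is again of the form `P⋆ P`, because `Mₖ(B)` carries the faithful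
positive functional `φ_B ∘ trace` and the square root of left multiplication by a positive
element is again a left multiplication.
-/

open scoped ComplexOrder InnerProductSpace

structure IsFaithfulPositive {C : Type*} [Ring C] [Algebra ℂ C] [StarRing C]
    (Φ : C →ₗ[ℂ] ℂ) : Prop where
  nonneg : ∀ x, 0 ≤ Φ (star x * x)
  eq_zero : ∀ x, Φ (star x * x) = 0 → x = 0

@[simp]
theorem braket_tmul {C : Type*} [Ring C] [Algebra ℂ C] [StarRing C]
    (Φ : C →ₗ[ℂ] ℂ) (c d x y : C) : braket Φ c d (x ⊗ₜ y) = Φ (star c * x) * Φ (star d * y) := by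
  simp [braket]

theorem braket_eq_dualDistrib {C : Type*} [Ring C] [Algebra ℂ C] [StarRing C]
    (Φ : C →ₗ[ℂ] ℂ) (c d : C) :
    braket Φ c d = TensorProduct.dualDistrib ℂ C C
      ((LinearMap.mul ℂ C).compr₂ Φ (star c) ⊗ₜ (LinearMap.mul ℂ C).compr₂ Φ (star d)) :=
  TensorProduct.ext' fun x y => by simp

theorem Matrix.map_star_mul_self_eq_sum {R S F n ι : Type*} [NonUnitalNonAssocSemiring R]
    [StarRing R] [NonUnitalNonAssocSemiring S] [StarRing S] [FunLike F R S]
    [AddMonoidHomClass F R S] [Fintype n] [Fintype ι]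
    (f : F) (g : ι → R → S) (hfg : ∀ x y, f (star x * y) = ∑ s, star (g s x) * g s y)
    (N : Matrix n n R) : (star N * N).map f = ∑ s, star (N.map (g s)) * N.map (g s) := by
  ext i j
  simp only [Matrix.map_apply, Matrix.mul_apply, Matrix.star_apply, map_sum, hfg,
    Matrix.sum_apply]
  exact Finset.sum_comm

namespace IsFaithfulPositive

section

variable {C : Type*} [Ring C] [Algebra ℂ C] [StarRing C] {Φ : C →ₗ[ℂ] ℂ}

theorem of_re_im (hpos : ∀ x : C, 0 ≤ (Φ (star x * x)).re ∧ (Φ (star x * x)).im = 0)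
    (hfaith : ∀ x : C, x ≠ 0 → Φ (star x * x) ≠ 0) : IsFaithfulPositive Φ where
  nonneg x := Complex.nonneg_iff.2 ⟨(hpos x).1, (hpos x).2.symm⟩
  eq_zero x := not_imp_not.1 (hfaith x)

theorem comp_traceLinearMap (hΦ : IsFaithfulPositive Φ) (n : Type*) [Fintype n] [DecidableEq n] :
    IsFaithfulPositive (Φ ∘ₗ Matrix.traceLinearMap n ℂ C) := by
  have trace_eq (T : Matrix n n C) :
      (Φ ∘ₗ Matrix.traceLinearMap n ℂ C) (star T * T) = ∑ i, ∑ j, Φ (star (T j i) * T j i) := by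
    simp [Matrix.trace, Matrix.mul_apply, Matrix.star_apply]
  refine ⟨fun T => ?_, fun T hT => ?_⟩
  · rw [trace_eq]
    exact Finset.sum_nonneg fun i _ => Finset.sum_nonneg fun j _ => hΦ.nonneg _
  · rw [trace_eq, Finset.sum_eq_zero_iff_of_nonneg fun i _ =>
      Finset.sum_nonneg fun j _ => hΦ.nonneg _] at hT
    ext i j
    exact hΦ.eq_zero _ <| (Finset.sum_eq_zero_iff_of_nonneg fun _ _ => hΦ.nonneg _).1
      (hT j (Finset.mem_univ _)) i (Finset.mem_univ _)

theorem mul_compr₂_surjective [FiniteDimensional ℂ C] (hΦ : IsFaithfulPositive Φ) :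
    Function.Surjective ((LinearMap.mul ℂ C).compr₂ Φ) := by
  refine (LinearMap.injective_iff_surjective_of_finrank_eq_finrank
    Subspace.dual_finrank_eq.symm).1 ((injective_iff_map_eq_zero _).2 fun c hc => ?_)
  simpa using hΦ.eq_zero (star c) (by simpa using congr($hc (star c)))

theorem ext_braket [FiniteDimensional ℂ C] (hΦ : IsFaithfulPositive Φ) {t t' : C ⊗[ℂ] C}
    (h : ∀ c d, braket Φ c d t = braket Φ c d t') : t = t' := by
  rw [← sub_eq_zero, ← Module.forall_dual_apply_eq_zero_iff ℂ]
  intro F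
  obtain ⟨G, rfl⟩ : ∃ G, TensorProduct.dualDistrib ℂ C C G = F :=
    (TensorProduct.dualDistribEquiv ℂ C C).surjective F
  induction G using TensorProduct.induction_on with
  | zero => simp
  | tmul g g' =>
    obtain ⟨c, rfl⟩ := hΦ.mul_compr₂_surjective g
    obtain ⟨d, rfl⟩ := hΦ.mul_compr₂_surjective g'
    rw [← star_star c, ← star_star d, ← braket_eq_dualDistrib, map_sub, h, sub_self]
  | add G G' hG hG' => rw [map_add, LinearMap.add_apply, hG, hG', add_zero]

end

section

variable {C : Type*} [Ring C] [Algebra ℂ C] [StarRing C] [StarModule ℂ C] {Φ : C →ₗ[ℂ] ℂ}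

theorem map_star_mul (hΦ : IsFaithfulPositive Φ) (x y : C) :
    Φ (star y * x) = starRingEnd ℂ (Φ (star x * y)) := by
  have im_eq_zero (z : C) : (Φ (star z * z)).im = 0 := (Complex.nonneg_iff.1 (hΦ.nonneg z)).2.symm
  have h₁ := im_eq_zero (x + y)
  have h₂ := im_eq_zero (x + Complex.I • y)
  simp only [star_add, star_smul, add_mul, mul_add, smul_mul_assoc, mul_smul_comm,
    map_add, map_smul, Complex.star_def, Complex.conj_I, smul_eq_mul, Complex.add_im,
    Complex.mul_im, Complex.mul_re, Complex.I_re, Complex.I_im, Complex.neg_re, Complex.neg_im,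
    im_eq_zero] at h₁ h₂
  apply Complex.ext <;> simp only [Complex.conj_re, Complex.conj_im] <;> linarith

noncomputable abbrev innerCore (hΦ : IsFaithfulPositive Φ) : InnerProductSpace.Core ℂ C where
  inner u v := Φ (star u * v)
  conj_inner_symm u v := (hΦ.map_star_mul v u).symm
  re_inner_nonneg u := (Complex.nonneg_iff.1 (hΦ.nonneg u)).1
  definite u := hΦ.eq_zero u
  add_left u v w := by simp only [star_add, add_mul, map_add]
  smul_left u v r := by simp only [star_smul, smul_mul_assoc, map_smul, smul_eq_mul]; rfl

variable [FiniteDimensional ℂ C]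

/-- Parseval's identity `∑ ⟪c, bₛ⟫ ⟪bₛ d, y⟫ = ⟪c d, y⟫`, for `b` an orthonormal basis of
`⟪u, v⟫ = Φ (u⋆ v)`. -/
theorem exists_sum_mul_eq (hΦ : IsFaithfulPositive Φ) :
    ∃ (n : ℕ) (b : Fin n → C), ∀ c d y : C,
      ∑ s, Φ (star c * b s) * Φ (star (b s * d) * y) = Φ (star (c * d) * y) := by
  let _ := hΦ.innerCore.toNormedAddCommGroup
  let _ := InnerProductSpace.ofCore hΦ.innerCore.toCore
  let b := stdOrthonormalBasis ℂ C
  refine ⟨_, b, fun c d y => ?_⟩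
  let ρ := LinearMap.adjoint (LinearMap.mulRight ℂ d)
  calc ∑ s, Φ (star c * b s) * Φ (star (b s * d) * y)
      = ∑ s, ⟪c, b s⟫_ℂ * ⟪b s, ρ y⟫_ℂ := by
        simp only [ρ, LinearMap.adjoint_inner_right]; rfl
    _ = ⟪c, ρ y⟫_ℂ := b.sum_inner_mul_inner c (ρ y)
    _ = Φ (star (c * d) * y) := LinearMap.adjoint_inner_right _ _ _

/-- Left multiplication by `a = ∑ xᵢ⋆ xᵢ` is a positive operator for `⟪u, v⟫ = Φ (u⋆ v)`; its
square root commutes with all right multiplications, hence is left multiplication by some `p`. -/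
theorem exists_star_mul_self_eq_sum (hΦ : IsFaithfulPositive Φ) {ι : Type*} [Fintype ι]
    (x : ι → C) : ∃ p : C, ∑ i, star (x i) * x i = star p * p := by
  let _ := hΦ.innerCore.toNormedAddCommGroup
  let _ := InnerProductSpace.ofCore hΦ.innerCore.toCore
  have _ : CompleteSpace C := FiniteDimensional.complete ℂ C
  let ℓ (x : C) : C →L[ℂ] C := LinearMap.toContinuousLinearMap (LinearMap.mulLeft ℂ x)
  have ℓ_apply (x u : C) : ℓ x u = x * u := rfl
  have ℓ_injective (x y : C) (h : ℓ x = ℓ y) : x = y := by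
    simpa [ℓ_apply] using congr($h 1)
  have ℓ_mul (x y : C) : ℓ (x * y) = ℓ x * ℓ y := by
    ext u; simp [ℓ_apply, mul_assoc]
  have ℓ_star (x : C) : ℓ (star x) = star (ℓ x) := by
    rw [ContinuousLinearMap.star_eq_adjoint, ContinuousLinearMap.eq_adjoint_iff]
    intro u v
    change Φ (star (star x * u) * v) = Φ (star u * (x * v))
    rw [star_mul, star_star, mul_assoc]
  set a := ∑ i, star (x i) * x i
  have ℓ_nonneg : 0 ≤ ℓ a := by
    have : ℓ a = ∑ i, star (ℓ (x i)) * ℓ (x i) := by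
      ext u; simp [a, ℓ_apply, ← ℓ_star, Finset.sum_mul, mul_assoc]
    rw [this]
    exact Finset.sum_nonneg fun i _ => star_mul_self_nonneg _
  set R := CFC.sqrt (ℓ a)
  have ℓ_R : ℓ (R 1) = R := by
    ext u
    have : Commute (ℓ a) (LinearMap.toContinuousLinearMap (LinearMap.mulRight ℂ u)) := by
      ext v; simp [ℓ_apply, mul_assoc]
    simpa [ℓ_apply, R, CFC.sqrt] using congr($((this.cfcₙ_nnreal NNReal.sqrt).eq) 1).symm
  refine ⟨R 1, ℓ_injective _ _ ?_⟩
  rw [ℓ_mul, ℓ_star, ℓ_R, (CFC.sqrt_nonneg _).isSelfAdjoint.star_eq,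
    CFC.sqrt_mul_sqrt_self _ ℓ_nonneg]

end

end IsFaithfulPositive

theorem IsCompletelyPositive.of_map_star_mul_eq_sum {A B : Type*} [Ring A] [Algebra ℂ A]
    [StarRing A] [Ring B] [Algebra ℂ B] [StarRing B] [StarModule ℂ B] [FiniteDimensional ℂ B]
    {φ : B →ₗ[ℂ] ℂ} (hφ : IsFaithfulPositive φ) {f : A →ₗ[ℂ] B} {ι : Type*} [Fintype ι]
    (g : ι → A → B) (hfg : ∀ x y, f (star x * y) = ∑ s, star (g s x) * g s y) :
    IsCompletelyPositive f := by
  rintro k _ ⟨N, rfl⟩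
  rw [Matrix.map_star_mul_self_eq_sum f g hfg]
  exact (hφ.comp_traceLinearMap (Fin k)).exists_star_mul_self_eq_sum _

theorem IsComulAdjoint.exists_apply_star_mul_eq_sum {C : Type*} [Ring C] [Algebra ℂ C]
    [StarRing C] [StarModule ℂ C] [FiniteDimensional ℂ C] {Φ : C →ₗ[ℂ] ℂ}
    {δ : C →ₗ[ℂ] C ⊗[ℂ] C} (hδ : IsComulAdjoint Φ δ) (hΦ : IsFaithfulPositive Φ) :
    ∃ (n : ℕ) (b : Fin n → C), ∀ x y : C,
      δ (star x * y) = ∑ s, (star x * b s) ⊗ₜ (star (b s) * y) := by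
  obtain ⟨n, b, hb⟩ := hΦ.exists_sum_mul_eq
  refine ⟨n, b, fun x y => hΦ.ext_braket fun c d => ?_⟩
  rw [hδ, map_sum]
  simpa only [braket_tmul, ← mul_assoc, ← star_mul] using (hb (x * c) d y).symm

theorem star_cohomomorphism_is_channel_general
    {A : Type*} [NormedRing A] [StarRing A]
    [NormedAlgebra ℂ A] [StarModule ℂ A] [FiniteDimensional ℂ A]
    {B : Type*} [NormedRing B] [StarRing B]
    [NormedAlgebra ℂ B] [StarModule ℂ B] [FiniteDimensional ℂ B]
    (φA : A →ₗ[ℂ] ℂ) (φB : B →ₗ[ℂ] ℂ)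
    (hposA : ∀ x : A, 0 ≤ (φA (star x * x)).re ∧ (φA (star x * x)).im = 0)
    (hfaithA : ∀ x : A, x ≠ 0 → φA (star x * x) ≠ 0)
    (hposB : ∀ x : B, 0 ≤ (φB (star x * x)).re ∧ (φB (star x * x)).im = 0)
    (hfaithB : ∀ x : B, x ≠ 0 → φB (star x * x) ≠ 0)
    (δA : A →ₗ[ℂ] A ⊗[ℂ] A) (hδA : IsComulAdjoint φA δA)
    (δB : B →ₗ[ℂ] B ⊗[ℂ] B)
    (hspecB : (LinearMap.mul' ℂ B) ∘ₗ δB = LinearMap.id)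
    (f : A →ₗ[ℂ] B)
    (hcomul : (TensorProduct.map f f) ∘ₗ δA = δB ∘ₗ f)
    (hcounit : φB ∘ₗ f = φA)
    (hstar : ∀ a : A, f (star a) = star (f a)) :
    IsCompletelyPositive f ∧ φB ∘ₗ f = φA := by
  obtain ⟨n, b, hδA_eq⟩ := hδA.exists_apply_star_mul_eq_sum (.of_re_im hposA hfaithA)
  refine ⟨.of_map_star_mul_eq_sum (.of_re_im hposB hfaithB)
    (fun s x => f (star (b s) * x)) fun x y => ?_, hcounit⟩
  calc f (star x * y) = LinearMap.mul' ℂ B (δB (f (star x * y))) := congr($hspecB _).symm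
    _ = LinearMap.mul' ℂ B (TensorProduct.map f f (δA (star x * y))) := by
      rw [← LinearMap.comp_apply (TensorProduct.map f f), hcomul, LinearMap.comp_apply]
    _ = ∑ s, star (f (star (b s) * x)) * f (star (b s) * y) := by
      simp [hδA_eq, ← hstar, star_mul]

/-- Let `A`, `B` be finite-dimensional C*-algebras with faithful positive
functionals, viewed as *special* Frobenius algebras in f.d. Hilbert spaces (`m ∘ m† = id`).
Any counital coalgebra `*`-cohomomorphism `f : A → B` (intertwining the comultiplications
`m†`, preserving the counits `u† = φ`, and compatible with the involutions) is completely
positive and functional-preserving; in particular `f` is a channel. -/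
theorem star_cohomomorphism_is_channel
    {A : Type*} [NormedRing A] [StarRing A] [CStarRing A]
    [NormedAlgebra ℂ A] [StarModule ℂ A] [FiniteDimensional ℂ A]
    {B : Type*} [NormedRing B] [StarRing B] [CStarRing B]
    [NormedAlgebra ℂ B] [StarModule ℂ B] [FiniteDimensional ℂ B]
    (φA : A →ₗ[ℂ] ℂ) (φB : B →ₗ[ℂ] ℂ)
    (hposA : ∀ x : A, 0 ≤ (φA (star x * x)).re ∧ (φA (star x * x)).im = 0)
    (hfaithA : ∀ x : A, x ≠ 0 → φA (star x * x) ≠ 0)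
    (hposB : ∀ x : B, 0 ≤ (φB (star x * x)).re ∧ (φB (star x * x)).im = 0)
    (hfaithB : ∀ x : B, x ≠ 0 → φB (star x * x) ≠ 0)
    (δA : A →ₗ[ℂ] A ⊗[ℂ] A) (hδA : IsComulAdjoint φA δA)
    (δB : B →ₗ[ℂ] B ⊗[ℂ] B) (hδB : IsComulAdjoint φB δB)
    (hspecA : (LinearMap.mul' ℂ A) ∘ₗ δA = LinearMap.id)
    (hspecB : (LinearMap.mul' ℂ B) ∘ₗ δB = LinearMap.id)
    (f : A →ₗ[ℂ] B)
    (hcomul : (TensorProduct.map f f) ∘ₗ δA = δB ∘ₗ f)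
    (hcounit : φB ∘ₗ f = φA)
    (hstar : ∀ a : A, f (star a) = star (f a)) :
    IsCompletelyPositive f ∧ φB ∘ₗ f = φA :=
  star_cohomomorphism_is_channel_general φA φB hposA hfaithA hposB hfaithB δA hδA δB hspecB f hcomul
    hcounit hstar
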